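/- For exponential-weights sampling distributions built from two cumulative loss vectors, the ℓ¹ distance of the induced probability distributions is bounded by the learning rate times the ℓ¹ distance of the loss vectors over 2. That is, if p̂_a = exp(−η L̂_a)/∑_k exp(−η L̂_k) and p_a = exp(−η L_a)/∑_k exp(−η L_k) for cumulative loss vectors L̂, L ∈ ℝ^n and learning rate η > 0, then ∑_a |p̂_a − p_a| ≤ (η/2) ∑_a |L̂_a − L_a|. -/

import Mathlib

/-!
Changing one coordinate `x i` of the logits moves mass between action `i` and the rest, and
all other probabilities scale by a common factor, so the ℓ¹ change of the softmax is twice the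
change of its `i`-th coordinate. As a function of `x i` that coordinate is a shifted sigmoid,
which is `1/4`-Lipschitz. Changing the coordinates one at a time and using the triangle
inequality gives the `1/2`-Lipschitz bound in ℓ¹.
-/

open Finset Real

namespace Real

theorem sigmoid_mul_one_sub_sigmoid_le (x : ℝ) : sigmoid x * (1 - sigmoid x) ≤ 1 / 4 := by
  nlinarith [sq_nonneg (sigmoid x - 1 / 2)]

theorem lipschitzWith_sigmoid : LipschitzWith (1 / 4) sigmoid := by
  refine lipschitzWith_of_nnnorm_deriv_le (fun _ => differentiableAt_sigmoid) fun x => ?_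
  rw [deriv_sigmoid, ← NNReal.coe_le_coe, coe_nnnorm, norm_of_nonneg
    (mul_nonneg (sigmoid_nonneg x) (sub_nonneg.2 (sigmoid_le_one x)))]
  exact_mod_cast sigmoid_mul_one_sub_sigmoid_le x

theorem exp_div_exp_add_eq_sigmoid {S : ℝ} (hS : 0 < S) (t : ℝ) :
    exp t / (exp t + S) = sigmoid (t - log S) := by
  rw [sigmoid_def, exp_neg, exp_sub, exp_log hS]
  field_simp

theorem abs_exp_div_exp_add_sub_le {S : ℝ} (hS : 0 ≤ S) (s t : ℝ) :
    |exp s / (exp s + S) - exp t / (exp t + S)| ≤ |s - t| / 4 := by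
  rcases hS.eq_or_lt with rfl | hS
  · simp only [add_zero, div_self (exp_ne_zero _), sub_self, abs_zero]
    positivity
  rw [exp_div_exp_add_eq_sigmoid hS, exp_div_exp_add_eq_sigmoid hS, ← dist_eq, ← dist_eq]
  have := lipschitzWith_sigmoid.dist_le_mul (s - log S) (t - log S)
  rw [dist_sub_right] at this
  push_cast at this
  linarith

end Real

theorem abs_div_sub_div_eq_mul {c : ℝ} (hc : 0 ≤ c) (p q : ℝ) :
    |c / p - c / q| = c * |1 / p - 1 / q| := by
  rw [← abs_of_nonneg hc, ← abs_mul, mul_sub, mul_one_div, mul_one_div, abs_of_nonneg hc]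

section Softmax

variable {ι : Type*} [Fintype ι]

noncomputable def softmax (x : ι → ℝ) (a : ι) : ℝ := exp (x a) / ∑ k, exp (x k)

theorem sum_abs_softmax_sub_le_of_forall_ne_eq {x y : ι → ℝ} {i : ι}
    (hxy : ∀ a, a ≠ i → x a = y a) :
    ∑ a, |softmax x a - softmax y a| ≤ |x i - y i| / 2 := by
  classical
  set S := ∑ a ∈ univ.erase i, exp (x a)
  have hS : 0 ≤ S := sum_nonneg fun a _ => (exp_pos _).le
  have hZx : ∑ k, exp (x k) = exp (x i) + S := (add_sum_erase _ _ (mem_univ i)).symm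
  have hZy : ∑ k, exp (y k) = exp (y i) + S := by
    rw [← add_sum_erase _ _ (mem_univ i)]
    congr 1
    exact sum_congr rfl fun a ha => by rw [hxy a (ne_of_mem_erase ha)]
  have hoff : ∑ a ∈ univ.erase i, |softmax x a - softmax y a|
      = |softmax x i - softmax y i| := by
    calc ∑ a ∈ univ.erase i, |softmax x a - softmax y a|
        = ∑ a ∈ univ.erase i, exp (x a) * |1 / (exp (x i) + S) - 1 / (exp (y i) + S)| :=
          sum_congr rfl fun a ha => by
            rw [softmax, softmax, ← hxy a (ne_of_mem_erase ha), hZx, hZy,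
              abs_div_sub_div_eq_mul (exp_pos _).le]
      _ = |S / (exp (x i) + S) - S / (exp (y i) + S)| := by
          rw [← sum_mul, abs_div_sub_div_eq_mul hS]
      _ = |softmax x i - softmax y i| := by
          rw [softmax, softmax, hZx, hZy, abs_sub_comm]
          congr 1
          field_simp
          ring
  calc ∑ a, |softmax x a - softmax y a|
      = 2 * |softmax x i - softmax y i| := by
        rw [← add_sum_erase _ _ (mem_univ i), hoff]; ring
    _ ≤ 2 * (|x i - y i| / 4) := by
        rw [softmax, softmax, hZx, hZy]
        gcongr
        exact abs_exp_div_exp_add_sub_le hS _ _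
    _ = |x i - y i| / 2 := by ring

theorem sum_abs_softmax_sub_le_of_forall_notMem_eq (s : Finset ι) {x y : ι → ℝ}
    (hxy : ∀ a ∉ s, x a = y a) :
    ∑ a, |softmax x a - softmax y a| ≤ (∑ a ∈ s, |x a - y a|) / 2 := by
  classical
  induction s using Finset.induction_on generalizing x with
  | empty =>
    have : x = y := funext fun a => hxy a (notMem_empty a)
    simp [this]
  | insert i s hi ih =>
    set z := Function.update x i (y i)
    have hzi : z i = y i := Function.update_self ..
    have hxz : ∀ a, a ≠ i → x a = z a := fun a ha => (Function.update_of_ne ha _ _).symm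
    have hzy : ∀ a ∉ s, z a = y a := by
      intro a ha
      by_cases hai : a = i
      · rwa [hai]
      · rw [← hxz a hai]; exact hxy a (by simp [hai, ha])
    have hsz : ∑ a ∈ s, |z a - y a| = ∑ a ∈ s, |x a - y a| :=
      sum_congr rfl fun a ha => by rw [hxz a (ne_of_mem_of_not_mem ha hi)]
    calc ∑ a, |softmax x a - softmax y a|
        ≤ ∑ a, (|softmax x a - softmax z a| + |softmax z a - softmax y a|) :=
          sum_le_sum fun a _ => abs_sub_le _ _ _
      _ ≤ |x i - z i| / 2 + (∑ a ∈ s, |z a - y a|) / 2 := by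
          rw [sum_add_distrib]
          exact add_le_add (sum_abs_softmax_sub_le_of_forall_ne_eq hxz) (ih hzy)
      _ = (∑ a ∈ insert i s, |x a - y a|) / 2 := by
          rw [sum_insert hi, hsz, hzi]; ring

theorem sum_abs_softmax_sub_le (x y : ι → ℝ) :
    ∑ a, |softmax x a - softmax y a| ≤ (∑ a, |x a - y a|) / 2 :=
  sum_abs_softmax_sub_le_of_forall_notMem_eq univ fun a ha => absurd (mem_univ a) ha

end Softmax

/-- For exponential-weights distributions built from two
cumulative-loss vectors with learning rate `η > 0`, the ℓ¹ distance of the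
induced probability distributions is at most `(η/2)` times the ℓ¹ distance of
the loss vectors. -/
theorem exp_weights_l1_perturbation
    (n : ℕ) (η : ℝ) (hη : 0 < η) (Lhat L : Fin n → ℝ) :
    ∑ a, |Real.exp (-η * Lhat a) / (∑ k, Real.exp (-η * Lhat k))
          - Real.exp (-η * L a) / (∑ k, Real.exp (-η * L k))|
      ≤ (η / 2) * ∑ a, |Lhat a - L a| := by
  have hscale : ∀ a, |-η * Lhat a - -η * L a| = η * |Lhat a - L a| := fun a => by
    rw [← mul_sub, abs_mul, abs_neg, abs_of_pos hη]
  calc _ ≤ (∑ a, |-η * Lhat a - -η * L a|) / 2 :=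
        sum_abs_softmax_sub_le (fun a => -η * Lhat a) fun a => -η * L a
    _ = (η / 2) * ∑ a, |Lhat a - L a| := by
        simp only [hscale, ← mul_sum]; ring
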